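/- For all integers n ≥ k ≥ 0, the absolute value |v(n,k)|, where v(n,k) = 4^{n−k}·t(2n+1, 2k+1), equals the number of (n,k)-Riordan complexes, i.e., the number of ways to choose a set partition {B_1,…,B_{2k+1}} of {1,…,2n+1} into 2k+1 blocks each of odd cardinality together with, for each block B_j, an ordered pair (σ_j, τ_j) of fixed-point-free involutions on B_j \ {max(B_j)}. -/

import Mathlib

open Polynomial

/-- The numbers `v n k = 4^(n-k) * t (2n+1) (2k+1)`, where `t` are the central factorial
numbers of the first kind. -/
def v : ℕ → ℕ → ℤ
  | 0, 0 => 1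
  | 0, _ + 1 => 0
  | n + 1, 0 => -(2 * (n : ℤ) + 1) ^ 2 * v n 0
  | n + 1, k + 1 => v n k - (2 * (n : ℤ) + 1) ^ 2 * v n (k + 1)

/-!
Writing a fixed-point-free involution `f` of an `m`-set as `g * (y f(y))`, with `g` a
fixed-point-free involution of the other `m - 2` points, shows that their number `N m` satisfies
`N (m + 2) = (m + 1) N m`. So a Riordan complex is a set partition in which a block of size `s`
carries weight `N (s - 1) ^ 2`, and those with `j` blocks on `m` points are counted by the partial
Bell polynomial `B_{m,j}` in these weights (split off the block of one point).

With `C = Σ N(m)² x^m / m! = (1 - x²)^(-1/2)`, the exponential generating functions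
`B_j = Σ_m B_{m,j} x^m / m!` satisfy `B_{j+1}' = C B_j`, i.e. `B_j = arcsin(x)^j / j!`. From
`(1 - x²) C' = x C` and `(1 - x²) C² = 1` one gets `(1 - x²) B_{j+2}'' = x B_{j+2}' + B_j`, which
on coefficients reads `B_{m+2,j+2} = m² B_{m,j+2} + B_{m,j}`. For `m = 2n + 1`, `j = 2k + 1` this
is, up to the sign `(-1)^(n+k)`, the recursion defining `v`.
-/

open Finset Equiv
open scoped Nat

def fpfInvolutionCount : ℕ → ℕ
  | 0 => 1
  | 1 => 0
  | m + 2 => (m + 1) * fpfInvolutionCount m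

lemma fpfInvolutionCount_succ (m : ℕ) :
    fpfInvolutionCount (m + 1) = m * fpfInvolutionCount (m - 1) := by
  cases m <;> rfl

section Involutions

variable {α : Type*} [DecidableEq α]

lemma mul_swap_mul_mul_swap {g : Perm α} {y z : α} (hgy : g y = y) (hgz : g z = z) :
    g * swap y z * (g * swap y z) = g * g := by
  have hcomm : g * swap y z = swap y z * g := by rw [mul_swap_eq_swap_mul, hgy, hgz]
  rw [mul_assoc, ← mul_assoc (swap y z), ← hcomm, mul_assoc, swap_mul_self, mul_one]

variable [Fintype α]

abbrev InvolutionOn (S : Finset α) : Type _ := {f : Perm α // f * f = 1 ∧ f.support = S}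

lemma support_mul_swap {g : Perm α} {y z : α} (hyz : y ≠ z) (hgy : g y = y) (hgz : g z = z) :
    (g * swap y z).support = g.support ∪ {y, z} := by
  have hdisj : Perm.Disjoint g (swap y z) := fun x => by
    by_cases hx : x = y ∨ x = z
    · rcases hx with rfl | rfl <;> simp [*]
    · push Not at hx
      exact Or.inr (swap_apply_of_ne_of_ne hx.1 hx.2)
  rw [hdisj.support_mul, Perm.support_swap hyz]

lemma mul_swap_involutionOn_erase {f : Perm α} {S : Finset α} {y z : α} (hff : f * f = 1)
    (hfS : f.support = S) (hyz : y ≠ z) (hfy : f y = z) :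
    f * swap y z * (f * swap y z) = 1 ∧ (f * swap y z).support = (S.erase y).erase z := by
  have hfz : f z = y := by rw [← hfy]; exact DFunLike.congr_fun hff y
  have hgy : (f * swap y z) y = y := by simp [hfz]
  have hgz : (f * swap y z) z = z := by simp [hfy]
  have hsupp := support_mul_swap hyz hgy hgz
  rw [Equiv.mul_swap_mul_self, hfS] at hsupp
  have hinv := mul_swap_mul_mul_swap hgy hgz
  rw [Equiv.mul_swap_mul_self] at hinv
  refine ⟨hinv.symm.trans hff, ?_⟩
  rw [hsupp]
  ext x
  by_cases x = y <;> by_cases x = z <;> simp_all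

lemma mul_swap_involutionOn_of_erase {g : Perm α} {S : Finset α} {y z : α} (hgg : g * g = 1)
    (hgS : g.support = (S.erase y).erase z) (hy : y ∈ S) (hz : z ∈ S.erase y) :
    g * swap y z * (g * swap y z) = 1 ∧ (g * swap y z).support = S := by
  have hyz : y ≠ z := (ne_of_mem_erase hz).symm
  have hgy : g y = y := Perm.notMem_support.1 (by simp [hgS])
  have hgz : g z = z := Perm.notMem_support.1 (by simp [hgS])
  refine ⟨(mul_swap_mul_mul_swap hgy hgz).trans hgg, ?_⟩
  rw [support_mul_swap hyz hgy hgz, hgS]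
  ext x
  by_cases x = y <;> by_cases x = z <;> simp_all

def involutionOnFiberEquiv {S : Finset α} {y z : α} (hy : y ∈ S) (hz : z ∈ S.erase y) :
    {f : InvolutionOn S // f.1 y = z} ≃ InvolutionOn ((S.erase y).erase z) where
  toFun f := ⟨f.1.1 * swap y z,
    mul_swap_involutionOn_erase f.1.2.1 f.1.2.2 (ne_of_mem_erase hz).symm f.2⟩
  invFun g := ⟨⟨g.1 * swap y z, mul_swap_involutionOn_of_erase g.2.1 g.2.2 hy hz⟩, by
    have hgz : g.1 z = z := Perm.notMem_support.1 (by simp [g.2.2])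
    simp [hgz]⟩
  left_inv f := by ext1; ext1; exact mul_swap_involutive y z f.1.1
  right_inv g := by ext1; exact mul_swap_involutive y z g.1

lemma card_involutionOn_eq_sum {S : Finset α} {y : α} (hy : y ∈ S) :
    Fintype.card (InvolutionOn S) =
      ∑ z ∈ S.erase y, Fintype.card (InvolutionOn ((S.erase y).erase z)) := by
  have hmaps : ∀ f ∈ (univ : Finset (InvolutionOn S)), f.1 y ∈ S.erase y := by
    rintro ⟨f, -, rfl⟩ -
    have hfy : f y ≠ y := Perm.mem_support.1 hy
    exact mem_erase.2 ⟨hfy, Perm.mem_support.2 fun h => hfy (f.injective h)⟩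
  rw [← card_univ, card_eq_sum_card_fiberwise hmaps]
  refine sum_congr rfl fun z hz => ?_
  rw [← Fintype.card_congr (involutionOnFiberEquiv hy hz), Fintype.card_subtype]

lemma card_involutionOn (S : Finset α) :
    Fintype.card (InvolutionOn S) = fpfInvolutionCount #S := by
  induction h : #S using Nat.strong_induction_on generalizing S with
  | _ m ih =>
    obtain rfl | ⟨y, hy⟩ := S.eq_empty_or_nonempty
    · subst h
      exact Fintype.card_eq_one_iff.2
        ⟨⟨1, by simp⟩, fun f => Subtype.ext (Perm.support_eq_empty_iff.1 f.2.2)⟩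
    · obtain ⟨m, rfl⟩ := Nat.exists_eq_add_one_of_ne_zero (h ▸ (card_pos.2 ⟨y, hy⟩).ne')
      have hm : #(S.erase y) = m := by rw [card_erase_of_mem hy, h]; rfl
      calc Fintype.card (InvolutionOn S)
          = ∑ z ∈ S.erase y, fpfInvolutionCount (m - 1) :=
            (card_involutionOn_eq_sum hy).trans <| sum_congr rfl fun z hz =>
              ih _ (by omega) _ (by rw [card_erase_of_mem hz, hm])
        _ = fpfInvolutionCount (m + 1) := by
            rw [sum_const, hm, smul_eq_mul, fpfInvolutionCount_succ]

end Involutions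

def riordanWeight (s : ℕ) : ℕ := fpfInvolutionCount (s - 1) ^ 2

lemma riordanWeight_add_two (m : ℕ) : riordanWeight (m + 2) = m ^ 2 * riordanWeight m := by
  rcases m with _ | m
  · rfl
  · simp [riordanWeight, fpfInvolutionCount, mul_pow]

-- `B_{m,j}(w)`; in the recursion the block of the first point has `t + 1` elements.
def partialBell (w : ℕ → ℕ) : ℕ → ℕ → ℕ
  | 0, 0 => 1
  | 0, _ + 1 => 0
  | _ + 1, 0 => 0
  | m + 1, j + 1 => ∑ t ∈ range (m + 1), m.choose t * w (t + 1) * partialBell w (m - t) j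

lemma partialBell_zero_right (w : ℕ → ℕ) (m : ℕ) :
    partialBell w m 0 = if m = 0 then 1 else 0 := by
  cases m <;> rfl

lemma partialBell_succ_one (w : ℕ → ℕ) (m : ℕ) : partialBell w (m + 1) 1 = w (m + 1) := by
  rw [partialBell, sum_eq_single m]
  · simp [partialBell_zero_right]
  · intro t ht htm
    rw [partialBell_zero_right, if_neg (by rw [mem_range] at ht; omega), mul_zero]
  · simp

section Partitions

variable {α : Type*} [DecidableEq α]

def weightedPartitionCount (w : ℕ → ℕ) (s : Finset α) (j : ℕ) : ℕ :=
  ∑ P : Finpartition s with #P.parts = j, ∏ B ∈ P.parts, w #B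

namespace Finpartition

lemma sup_parts_erase {s B : Finset α} (P : Finpartition s) (hB : B ∈ P.parts) :
    (P.parts.erase B).sup id = s \ B := by
  have hdisj : Disjoint B ((P.parts.erase B).sup id) :=
    supIndep_iff_disjoint_erase.1 P.supIndep B hB
  have hs := P.sup_parts
  rw [← insert_erase hB, sup_insert, id, sup_eq_union] at hs
  exact (union_sdiff_cancel_left hdisj).symm.trans (congrArg (· \ B) hs)

lemma mem_parts_of_part_eq {s B : Finset α} {x : α} {P : Finpartition s} (hx : x ∈ s)
    (h : P.part x = B) : B ∈ P.parts :=
  h ▸ P.part_mem.2 hx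

def partEquiv {s B : Finset α} {x : α} (hx : x ∈ s) (hB : B ⊆ s) (hxB : x ∈ B) :
    {P : Finpartition s // P.part x = B} ≃ Finpartition (s \ B) where
  toFun P := P.1.ofSubset (erase_subset B _) (sup_parts_erase P.1 (mem_parts_of_part_eq hx P.2))
  invFun Q := ⟨Q.extend (ne_empty_of_mem hxB) disjoint_sdiff_self_left (sdiff_union_of_subset hB),
    part_eq_of_mem _ (by simp) hxB⟩
  left_inv P := by
    ext1; ext1
    simp [ofSubset, insert_erase (mem_parts_of_part_eq hx P.2)]
  right_inv Q := by
    ext1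
    refine erase_insert fun hBQ => ?_
    simpa [hxB] using Q.le hBQ hxB

lemma parts_partEquiv {s B : Finset α} {x : α} (hx : x ∈ s) (hB : B ⊆ s) (hxB : x ∈ B)
    (P : {P : Finpartition s // P.part x = B}) :
    (partEquiv hx hB hxB P).parts = P.1.parts.erase B := rfl

end Finpartition

lemma weightedPartitionCount_succ (w : ℕ → ℕ) {s : Finset α} {x : α} (hx : x ∈ s)
    (j : ℕ) :
    weightedPartitionCount w s (j + 1) =
      ∑ C ∈ (s.erase x).powerset, w (#C + 1) * weightedPartitionCount w (s \ insert x C) j := by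
  have hmaps :
      ∀ P ∈ (univ : Finset (Finpartition s)), (P.part x).erase x ∈ (s.erase x).powerset :=
    fun P _ => mem_powerset.2 (erase_subset_erase x (P.part_subset x))
  rw [weightedPartitionCount, sum_filter, ← sum_fiberwise_of_maps_to hmaps]
  refine sum_congr rfl fun C hC => ?_
  have hxC : x ∉ C := fun h => by simpa using mem_powerset.1 hC h
  have hCs : insert x C ⊆ s := insert_subset hx ((mem_powerset.1 hC).trans (erase_subset x s))
  rw [filter_congr fun P _ => erase_eq_iff_eq_insert (P.mem_part hx) hxC,
    sum_subtype _ (p := fun P : Finpartition s => P.part x = insert x C) (fun _ => by simp),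
    Fintype.sum_equiv (Finpartition.partEquiv hx hCs (mem_insert_self x C)) _
      (fun Q => w (#C + 1) * if #Q.parts = j then ∏ B ∈ Q.parts, w #B else 0),
    ← mul_sum, weightedPartitionCount, sum_filter]
  intro ⟨P, hP⟩
  have hBP := Finpartition.mem_parts_of_part_eq hx hP
  rw [Finpartition.parts_partEquiv, card_erase_of_mem hBP, ← card_insert_of_notMem hxC]
  by_cases hcard : #P.parts = j + 1
  · simp [hcard, mul_prod_erase _ (fun B => w #B) hBP]
  · have : #P.parts - 1 ≠ j := by have := card_pos.2 ⟨_, hBP⟩; omega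
    simp [hcard, this]

lemma weightedPartitionCount_empty (w : ℕ → ℕ) (j : ℕ) :
    weightedPartitionCount w (∅ : Finset α) j = partialBell w 0 j := by
  have : Unique (Finpartition (∅ : Finset α)) := Finpartition.instUniqueBot
  have hparts (P : Finpartition (∅ : Finset α)) : P.parts = ∅ := P.parts_eq_empty_iff.2 rfl
  cases j <;> simp [weightedPartitionCount, hparts, partialBell]

lemma weightedPartitionCount_zero (w : ℕ → ℕ) {s : Finset α} (hs : s.Nonempty) :
    weightedPartitionCount w s 0 = 0 := by
  simp [weightedPartitionCount, Finpartition.parts_eq_empty_iff, hs.ne_empty]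

theorem weightedPartitionCount_eq_partialBell (w : ℕ → ℕ) (s : Finset α) (j : ℕ) :
    weightedPartitionCount w s j = partialBell w #s j := by
  induction j generalizing s with
  | zero =>
    obtain rfl | hs := s.eq_empty_or_nonempty
    · exact weightedPartitionCount_empty w 0
    · obtain ⟨m, hm⟩ := Nat.exists_eq_add_one_of_ne_zero hs.card_pos.ne'
      rw [weightedPartitionCount_zero w hs, hm]
      rfl
  | succ j ih =>
    obtain rfl | ⟨x, hx⟩ := s.eq_empty_or_nonempty
    · exact weightedPartitionCount_empty w (j + 1)
    · obtain ⟨m, hm⟩ := Nat.exists_eq_add_one_of_ne_zero (card_pos.2 ⟨x, hx⟩).ne'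
      have hxm : #(s.erase x) = m := by rw [card_erase_of_mem hx, hm, Nat.add_sub_cancel]
      have hcard : ∀ C ∈ (s.erase x).powerset, #(s \ insert x C) = m - #C := fun C hC => by
        have hCs := mem_powerset.1 hC
        have hxC : x ∉ C := fun h => by simpa using hCs h
        rw [card_sdiff_of_subset (insert_subset hx (hCs.trans (erase_subset x s))),
          card_insert_of_notMem hxC, hm]
        omega
      rw [weightedPartitionCount_succ w hx,
        sum_congr rfl fun C hC => by rw [ih, hcard C hC],
        sum_powerset_apply_card (fun c => w (c + 1) * partialBell w (m - c) j), hxm, hm]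
      simp only [partialBell, smul_eq_mul, mul_assoc]

end Partitions

section RiordanComplexes

variable {α : Type*} [DecidableEq α] [LinearOrder α]

def eraseMax (B : Finset α) : Finset α := {x ∈ B | (x : WithBot α) ≠ B.max}

lemma card_eraseMax {B : Finset α} (hB : B.Nonempty) : #(eraseMax B) = #B - 1 := by
  have : eraseMax B = B.erase (B.max' hB) := by
    ext x
    simp [eraseMax, ← coe_max' hB, and_comm]
  rw [this, card_erase_of_mem (B.max'_mem hB)]

variable [Fintype α]

-- `(σ_B, τ_B) = (PST.2.1 B, PST.2.2 B)`, as permutations of `α` supported on `B \ {max B}`.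
variable (α) in
abbrev RiordanComplex (j : ℕ) : Type _ :=
  {PST : Finpartition (univ : Finset α) × (Finset α → Perm α) × (Finset α → Perm α) //
    #PST.1.parts = j ∧
    (∀ B ∈ PST.1.parts, Odd #B) ∧
    (∀ B, B ∉ PST.1.parts → PST.2.1 B = 1 ∧ PST.2.2 B = 1) ∧
    (∀ B ∈ PST.1.parts,
      PST.2.1 B * PST.2.1 B = 1 ∧ PST.2.2 B * PST.2.2 B = 1 ∧
      (∀ x, PST.2.1 B x ≠ x ↔ x ∈ B ∧ (x : WithBot α) ≠ B.max) ∧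
      (∀ x, PST.2.2 B x ≠ x ↔ x ∈ B ∧ (x : WithBot α) ≠ B.max))}

lemma support_eq_eraseMax_iff {f : Perm α} {B : Finset α} :
    f.support = eraseMax B ↔ ∀ x, f x ≠ x ↔ x ∈ B ∧ (x : WithBot α) ≠ B.max := by
  simp [Finset.ext_iff, eraseMax]

lemma odd_card_of_involutionOn_eraseMax {B : Finset α} (hB : B.Nonempty)
    (f : InvolutionOn (eraseMax B)) : Odd #B := by
  have h2 := Perm.two_dvd_card_support (σ := f.1) (by rw [pow_two, f.2.1])
  rw [f.2.2, card_eraseMax hB] at h2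
  have := hB.card_pos
  rw [Nat.odd_iff]
  omega

def riordanComplexEquiv (j : ℕ) :
    RiordanComplex α j ≃ Σ P : {P : Finpartition (univ : Finset α) // #P.parts = j},
      (B : P.1.parts) → InvolutionOn (eraseMax B.1) × InvolutionOn (eraseMax B.1) where
  toFun z := ⟨⟨z.1.1, z.2.1⟩, fun B =>
    (⟨z.1.2.1 B, (z.2.2.2.2 B B.2).1, support_eq_eraseMax_iff.2 (z.2.2.2.2 B B.2).2.2.1⟩,
     ⟨z.1.2.2 B, (z.2.2.2.2 B B.2).2.1, support_eq_eraseMax_iff.2 (z.2.2.2.2 B B.2).2.2.2⟩)⟩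
  invFun w := by
    refine ⟨(w.1.1,
      fun B => if h : B ∈ w.1.1.parts then (w.2 ⟨B, h⟩).1.1 else 1,
      fun B => if h : B ∈ w.1.1.parts then (w.2 ⟨B, h⟩).2.1 else 1),
      w.1.2, fun B hB => odd_card_of_involutionOn_eraseMax
        (w.1.1.nonempty_of_mem_parts hB) (w.2 ⟨B, hB⟩).1,
      fun B hB => by simp [hB], fun B hB => ?_⟩
    simp only [hB, dite_true]
    exact ⟨(w.2 ⟨B, hB⟩).1.2.1, (w.2 ⟨B, hB⟩).2.2.1,
      support_eq_eraseMax_iff.1 (w.2 ⟨B, hB⟩).1.2.2,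
      support_eq_eraseMax_iff.1 (w.2 ⟨B, hB⟩).2.2.2⟩
  left_inv z := by
    ext1
    refine Prod.ext rfl (Prod.ext (funext fun B => ?_) (funext fun B => ?_)) <;>
      by_cases h : B ∈ z.1.1.parts <;> simp [h, z.2.2.2.1 B]
  right_inv w := by
    refine Sigma.ext rfl (heq_of_eq (funext fun B => ?_))
    simp [B.2]

theorem card_riordanComplex (j : ℕ) :
    Nat.card (RiordanComplex α j) = weightedPartitionCount riordanWeight (univ : Finset α) j := by
  rw [Nat.card_congr (riordanComplexEquiv j), Nat.card_sigma, weightedPartitionCount,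
    sum_subtype _ (p := fun P : Finpartition (univ : Finset α) => #P.parts = j) (by simp)]
  refine sum_congr rfl fun P _ => ?_
  rw [Nat.card_pi, ← prod_coe_sort P.1.parts]
  refine prod_congr rfl fun B _ => ?_
  rw [Nat.card_prod, Nat.card_eq_fintype_card, card_involutionOn,
    card_eraseMax (P.1.nonempty_of_mem_parts B.2), riordanWeight, pow_two]

end RiordanComplexes

namespace PowerSeries

noncomputable def egf (a : ℕ → ℕ) : ℚ⟦X⟧ := mk fun m => (a m : ℚ) / m !

lemma coeff_egf (a : ℕ → ℕ) (m : ℕ) : coeff m (egf a) = (a m : ℚ) / m ! := coeff_mk _ _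

lemma egf_injective : Function.Injective egf := fun a b h => funext fun m => by
  have := congrArg (coeff m) h
  rw [coeff_egf, coeff_egf, div_left_inj' (by positivity)] at this
  exact_mod_cast this

lemma egf_zero : egf 0 = 0 := by
  ext m
  simp [coeff_egf]

lemma egf_add (a b : ℕ → ℕ) : egf a + egf b = egf (a + b) := by
  ext m
  simp [coeff_egf, add_div]

lemma derivative_egf (a : ℕ → ℕ) : d⁄dX ℚ (egf a) = egf (fun m => a (m + 1)) := by
  ext m
  rw [coeff_derivative, coeff_egf, coeff_egf, Nat.factorial_succ]
  push_cast
  field_simp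

lemma X_mul_egf (a : ℕ → ℕ) : X * egf a = egf (fun m => m * a (m - 1)) := by
  ext m
  rcases m with _ | m
  · simp [coeff_egf]
  · rw [coeff_succ_X_mul, coeff_egf, coeff_egf, Nat.factorial_succ]
    push_cast
    field_simp

lemma egf_mul (a b : ℕ → ℕ) :
    egf a * egf b = egf (fun m => ∑ t ∈ range (m + 1), m.choose t * a t * b (m - t)) := by
  ext m
  rw [coeff_mul,
    Nat.sum_antidiagonal_eq_sum_range_succ (fun p q => coeff p (egf a) * coeff q (egf b)),
    coeff_egf, Nat.cast_sum, sum_div]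
  refine sum_congr rfl fun t ht => ?_
  have htm : t ≤ m := Nat.lt_succ_iff.1 (mem_range.1 ht)
  rw [coeff_egf, coeff_egf]
  push_cast
  rw [Nat.cast_choose ℚ htm]
  field_simp

lemma constantCoeff_egf (a : ℕ → ℕ) : constantCoeff (egf a) = a 0 := by
  rw [← coeff_zero_eq_constantCoeff_apply, coeff_egf]
  simp

lemma arcsinODE_egf_iff (a b : ℕ → ℕ) :
    (1 - X ^ 2) * d⁄dX ℚ (d⁄dX ℚ (egf a)) = X * d⁄dX ℚ (egf a) + egf b ↔
      ∀ m, a (m + 2) = m ^ 2 * a m + b m := by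
  have hshift (m : ℕ) :
      m * a (m - 1 + 1) + m * ((m - 1) * a (m - 1 - 1 + 1 + 1)) = m ^ 2 * a m := by
    rcases m with _ | _ | m
    · simp
    · simp
    · simp only [Nat.add_sub_cancel]
      ring
  have hsolve (F G H : ℚ⟦X⟧) :
      (1 - X ^ 2) * F = X * G + H ↔ F = X * G + X * (X * F) + H := by
    constructor <;> intro h <;> linear_combination h
  rw [hsolve, derivative_egf, derivative_egf, X_mul_egf, X_mul_egf, X_mul_egf, egf_add, egf_add,
    egf_injective.eq_iff, funext_iff]
  simp only [Pi.add_apply, hshift]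

lemma derivative_egf_partialBell (w : ℕ → ℕ) (j : ℕ) :
    d⁄dX ℚ (egf fun m => partialBell w m (j + 1)) =
      d⁄dX ℚ (egf w) * egf fun m => partialBell w m j := by
  rw [derivative_egf, derivative_egf, egf_mul]
  rfl

theorem egf_partialBell_riordanWeight_arcsinODE (j : ℕ) :
    (1 - X ^ 2) * d⁄dX ℚ (d⁄dX ℚ (egf fun m => partialBell riordanWeight m (j + 2))) =
      X * d⁄dX ℚ (egf fun m => partialBell riordanWeight m (j + 2)) +
        egf fun m => partialBell riordanWeight m j := by
  set C := d⁄dX ℚ (egf riordanWeight)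
  have hC : (1 - X ^ 2) * d⁄dX ℚ C = X * C := by
    have := (arcsinODE_egf_iff riordanWeight 0).2 fun m => by simp [riordanWeight_add_two]
    rwa [egf_zero, add_zero] at this
  have hC2 : (1 - X ^ 2) * C ^ 2 = 1 := by
    refine derivative.ext ?_ ?_
    · simp only [Derivation.leibniz, Derivation.leibniz_pow, map_sub, Derivation.map_one_eq_zero,
        derivative_X, smul_eq_mul, nsmul_eq_mul]
      linear_combination 2 * C * hC
    · simp [C, derivative_egf, constantCoeff_egf, riordanWeight, fpfInvolutionCount]
  rw [derivative_egf_partialBell, Derivation.leibniz, derivative_egf_partialBell, smul_eq_mul]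
  linear_combination (egf fun m => partialBell riordanWeight m (j + 1)) * hC +
    (egf fun m => partialBell riordanWeight m j) * hC2

end PowerSeries

theorem partialBell_riordanWeight_add_two (m j : ℕ) :
    partialBell riordanWeight (m + 2) (j + 2) =
      m ^ 2 * partialBell riordanWeight m (j + 2) + partialBell riordanWeight m j :=
  (PowerSeries.arcsinODE_egf_iff _ _).1 (PowerSeries.egf_partialBell_riordanWeight_arcsinODE j) m

-- The sign `(-1) ^ (n + k)` avoids truncated subtraction; for `k > n` both sides vanish.
theorem v_eq_neg_one_pow_mul_partialBell (n k : ℕ) :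
    v n k = (-1) ^ (n + k) * partialBell riordanWeight (2 * n + 1) (2 * k + 1) := by
  induction n generalizing k with
  | zero =>
    cases k with
    | zero => simp [v, partialBell_succ_one, riordanWeight, fpfInvolutionCount]
    | succ k => simp [v, partialBell, Nat.mul_succ]
  | succ n ih =>
    cases k with
    | zero =>
      have h : partialBell riordanWeight (2 * n + 1 + 2) 1 =
          (2 * n + 1) ^ 2 * partialBell riordanWeight (2 * n + 1) 1 := by
        rw [partialBell_succ_one, partialBell_succ_one, riordanWeight_add_two]
      rw [v, ih, show 2 * (n + 1) + 1 = 2 * n + 1 + 2 by ring, h]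
      push_cast
      ring
    | succ k =>
      rw [v, ih, ih, show 2 * (n + 1) + 1 = 2 * n + 1 + 2 by ring,
        show 2 * (k + 1) + 1 = 2 * k + 1 + 2 by ring, partialBell_riordanWeight_add_two]
      push_cast
      ring

theorem stmt19_general (n k : ℕ) :
    (v n k).natAbs = Nat.card
      {PST : Finpartition (Finset.univ : Finset (Fin (2 * n + 1))) ×
          (Finset (Fin (2 * n + 1)) → Equiv.Perm (Fin (2 * n + 1))) ×
          (Finset (Fin (2 * n + 1)) → Equiv.Perm (Fin (2 * n + 1))) //
        PST.1.parts.card = 2 * k + 1 ∧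
        (∀ B ∈ PST.1.parts, Odd B.card) ∧
        (∀ B, B ∉ PST.1.parts → PST.2.1 B = 1 ∧ PST.2.2 B = 1) ∧
        (∀ B ∈ PST.1.parts,
          PST.2.1 B * PST.2.1 B = 1 ∧ PST.2.2 B * PST.2.2 B = 1 ∧
          (∀ x, PST.2.1 B x ≠ x ↔ x ∈ B ∧ (x : WithBot (Fin (2 * n + 1))) ≠ B.max) ∧
          (∀ x, PST.2.2 B x ≠ x ↔ x ∈ B ∧ (x : WithBot (Fin (2 * n + 1))) ≠ B.max))} := by
  rw [card_riordanComplex, weightedPartitionCount_eq_partialBell, card_univ, Fintype.card_fin,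
    v_eq_neg_one_pow_mul_partialBell, Int.natAbs_mul, Int.natAbs_pow]
  simp

/-- `|v n k|` is the number of `(n,k)`-Riordan complexes: a set partition of `{1,…,2n+1}`
into `2k+1` blocks of odd cardinality together with, for each block `B`, an ordered pair
of fixed-point-free involutions on `B \ {max B}` (modelled as permutations of the whole
ground set whose non-fixed points are exactly `B \ {max B}`, assigned by two functions
that are the identity off the blocks of the partition). -/
theorem stmt19 (n k : ℕ) (hkn : k ≤ n) :
    (v n k).natAbs = Nat.card
      {PST : Finpartition (Finset.univ : Finset (Fin (2 * n + 1))) ×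
          (Finset (Fin (2 * n + 1)) → Equiv.Perm (Fin (2 * n + 1))) ×
          (Finset (Fin (2 * n + 1)) → Equiv.Perm (Fin (2 * n + 1))) //
        PST.1.parts.card = 2 * k + 1 ∧
        (∀ B ∈ PST.1.parts, Odd B.card) ∧
        (∀ B, B ∉ PST.1.parts → PST.2.1 B = 1 ∧ PST.2.2 B = 1) ∧
        (∀ B ∈ PST.1.parts,
          PST.2.1 B * PST.2.1 B = 1 ∧ PST.2.2 B * PST.2.2 B = 1 ∧
          (∀ x, PST.2.1 B x ≠ x ↔ x ∈ B ∧ (x : WithBot (Fin (2 * n + 1))) ≠ B.max) ∧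
          (∀ x, PST.2.2 B x ≠ x ↔ x ∈ B ∧ (x : WithBot (Fin (2 * n + 1))) ≠ B.max))} :=
  stmt19_general n k
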